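/- arXiv:2010.07421 — 7 statements merged into one kernel-verified Lean document; each statement's English description precedes it below -/
import Mathlib

section
/- Let n₋, n₀, n₊ be natural numbers, B₊ a real n₀ × n₊ matrix, B₋ a real n₋ × n₀ matrix, and W₋, W₀, W₊ diagonal matrices of sizes n₋, n₀, n₊ respectively with strictly positive diagonal entries. Let φ : ℝ → ℝ be continuous, F : ℝ → ℝ a differentiable function with F' = φ, and ω ∈ ℝ^{n₀}. Define the energy E : ℝ^{n₀} → ℝ by E(θ) = −⟨ω, W₀θ⟩ + Σ_{i=1}^{n₊} (W₊ F(B₊ᵀθ))_i + Σ_{j=1}^{n₋} (W₋⁻¹ F(B₋ W₀ θ))_j, where F is applied componentwise. Then the vector field G(θ) = ω − [W₀⁻¹ B₊ W₊ φ(B₊ᵀθ) + B₋ᵀ W₋⁻¹ φ(B₋ W₀ θ)] satisfies G(θ) = −W₀⁻¹ ∇E(θ) for all θ ∈ ℝ^{n₀}; that is, the nonlinear simplicial flow at an intermediate dimension is a rescaled downhill gradient flow. -/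
/-!
Every term of `E` is a function of finitely many linear functionals of `θ`, so the chain rule gives
`∇E(θ) = -W₀ω + B₊W₊φ(B₊ᵀθ) + (B₋W₀)ᵀW₋⁻¹φ(B₋W₀θ)`. Since `W₀` is diagonal,
`(B₋W₀)ᵀ = W₀B₋ᵀ`, and multiplying by `W₀⁻¹` leaves exactly the vector field `-G(θ)`.
-/

open Matrix

section GradientCalculus

variable {H : Type*} [NormedAddCommGroup H] [InnerProductSpace ℝ H] [CompleteSpace H]
  {f g : H → ℝ} {f' g' x : H}

theorem HasGradientAt.add (hf : HasGradientAt f f' x) (hg : HasGradientAt g g' x) :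
    HasGradientAt (fun y => f y + g y) (f' + g') x := by
  rw [hasGradientAt_iff_hasFDerivAt, map_add] at *
  exact hf.add hg

theorem HasGradientAt.neg (hf : HasGradientAt f f' x) :
    HasGradientAt (fun y => -f y) (-f') x := by
  rw [hasGradientAt_iff_hasFDerivAt, map_neg] at *
  exact hf.neg

theorem HasGradientAt.sum {ι : Type*} {s : Finset ι} {f : ι → H → ℝ} {f' : ι → H}
    (hf : ∀ i ∈ s, HasGradientAt (f i) (f' i) x) :
    HasGradientAt (fun y => ∑ i ∈ s, f i y) (∑ i ∈ s, f' i) x := by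
  rw [hasGradientAt_iff_hasFDerivAt, map_sum]
  exact HasFDerivAt.fun_sum fun i hi => hasGradientAt_iff_hasFDerivAt.mp (hf i hi)

theorem HasGradientAt.const_mul (c : ℝ) (hf : HasGradientAt f f' x) :
    HasGradientAt (fun y => c * f y) (c • f') x := by
  rw [hasGradientAt_iff_hasFDerivAt, map_smul] at *
  exact hf.const_mul c

theorem HasDerivAt.comp_hasGradientAt {F : ℝ → ℝ} {F' : ℝ} (hF : HasDerivAt F F' (f x))
    (hf : HasGradientAt f f' x) : HasGradientAt (F ∘ f) (F' • f') x := by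
  rw [hasGradientAt_iff_hasFDerivAt, map_smul] at *
  exact hF.comp_hasFDerivAt x hf

theorem hasGradientAt_inner_left (a x : H) : HasGradientAt (fun y => inner ℝ a y) a x := by
  rw [hasGradientAt_iff_hasFDerivAt]
  exact (innerSL ℝ a).hasFDerivAt

end GradientCalculus

section Euclidean

variable {m n : Type*} [Fintype n]

theorem hasGradientAt_mulVec_apply (A : Matrix m n ℝ) (i : m) (θ : EuclideanSpace ℝ n) :
    HasGradientAt (fun θ : EuclideanSpace ℝ n => (A *ᵥ θ) i) (WithLp.toLp 2 (A i)) θ := by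
  convert hasGradientAt_inner_left (WithLp.toLp 2 (A i)) θ using 2
  simp [EuclideanSpace.inner_eq_star_dotProduct, mulVec, dotProduct_comm]

theorem hasGradientAt_sum_diagonal_mulVec_comp_mulVec [Fintype m] [DecidableEq m]
    (A : Matrix m n ℝ) (c : m → ℝ) {F φ : ℝ → ℝ} (hF : ∀ t, HasDerivAt F (φ t) t)
    (θ : EuclideanSpace ℝ n) :
    HasGradientAt (fun θ : EuclideanSpace ℝ n => ∑ i, (diagonal c *ᵥ fun i => F ((A *ᵥ θ) i)) i)
      (WithLp.toLp 2 (Aᵀ *ᵥ diagonal c *ᵥ fun i => φ ((A *ᵥ θ) i))) θ := by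
  simp only [mulVec_diagonal]
  convert HasGradientAt.sum (s := Finset.univ) fun i _ =>
    ((hF _).comp_hasGradientAt (hasGradientAt_mulVec_apply A i θ)).const_mul (c i) using 1
  · rfl
  · ext k
    simp [mulVec, dotProduct, diagonal_apply, mul_comm, mul_left_comm]

theorem hasGradientAt_dotProduct_mulVec [Fintype m] (v : m → ℝ)
    (A : Matrix m n ℝ) (θ : EuclideanSpace ℝ n) :
    HasGradientAt (fun θ : EuclideanSpace ℝ n => v ⬝ᵥ (A *ᵥ θ)) (WithLp.toLp 2 (Aᵀ *ᵥ v)) θ := by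
  convert hasGradientAt_inner_left (WithLp.toLp 2 (Aᵀ *ᵥ v)) θ using 2
  rw [EuclideanSpace.inner_eq_star_dotProduct, star_trivial, mulVec_transpose, dotProduct_mulVec,
    dotProduct_comm]

end Euclidean

theorem simplicial_flow_is_rescaled_gradient_flow_general
    (nm n0 np : ℕ)
    (Bp : Matrix (Fin n0) (Fin np) ℝ) (Bm : Matrix (Fin nm) (Fin n0) ℝ)
    (wm : Fin nm → ℝ) (w0 : Fin n0 → ℝ) (wp : Fin np → ℝ)
    (hw0 : ∀ i, 0 < w0 i)
    (φ F : ℝ → ℝ) (hF : Differentiable ℝ F) (hF' : deriv F = φ)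
    (ω : Fin n0 → ℝ)
    (E : EuclideanSpace ℝ (Fin n0) → ℝ)
    (hE : ∀ θ : EuclideanSpace ℝ (Fin n0),
      E θ = -(ω ⬝ᵥ (Matrix.diagonal w0).mulVec θ)
        + ∑ i, ((Matrix.diagonal wp).mulVec (fun i => F (Bp.transpose.mulVec θ i))) i
        + ∑ j, ((Matrix.diagonal fun j => (wm j)⁻¹).mulVec
            (fun j => F (Bm.mulVec ((Matrix.diagonal w0).mulVec θ) j))) j) :
    ∀ θ : EuclideanSpace ℝ (Fin n0),
      ω - ((Matrix.diagonal fun i => (w0 i)⁻¹).mulVec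
            (Bp.mulVec ((Matrix.diagonal wp).mulVec fun i => φ (Bp.transpose.mulVec θ i)))
          + Bm.transpose.mulVec ((Matrix.diagonal fun j => (wm j)⁻¹).mulVec
            fun j => φ (Bm.mulVec ((Matrix.diagonal w0).mulVec θ) j)))
        = -((Matrix.diagonal fun i => (w0 i)⁻¹).mulVec ((gradient E θ : EuclideanSpace ℝ (Fin n0)))) := by
  intro θ
  have hφ : ∀ t, HasDerivAt F (φ t) t := fun t => hF' ▸ (hF t).hasDerivAt
  have hE' : E = fun θ : EuclideanSpace ℝ (Fin n0) => -(ω ⬝ᵥ (diagonal w0 *ᵥ θ))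
      + ∑ i, (diagonal wp *ᵥ fun i => F ((Bpᵀ *ᵥ θ) i)) i
      + ∑ j, ((diagonal fun j => (wm j)⁻¹) *ᵥ fun j => F (((Bm * diagonal w0) *ᵥ θ) j)) j := by
    funext θ
    simp only [hE, mulVec_mulVec]
  have hgrad := ((hasGradientAt_dotProduct_mulVec ω (diagonal w0) θ).neg.add
    (hasGradientAt_sum_diagonal_mulVec_comp_mulVec Bpᵀ wp hφ θ)).add
    (hasGradientAt_sum_diagonal_mulVec_comp_mulVec (Bm * diagonal w0) (fun j => (wm j)⁻¹) hφ θ)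
  have hcancel : ∀ v, (diagonal fun i => (w0 i)⁻¹) *ᵥ (diagonal w0 *ᵥ v) = v := fun v => by
    simp [mulVec_mulVec, diagonal_mul_diagonal, fun i => inv_mul_cancel₀ (hw0 i).ne']
  rw [hE', hgrad.gradient]
  simp only [WithLp.ofLp_add, WithLp.ofLp_neg, mulVec_add, mulVec_neg, transpose_mul,
    diagonal_transpose, transpose_transpose, ← mulVec_mulVec, hcancel]
  abel

/-- The nonlinear simplicial flow at an intermediate dimension is a rescaled
downhill gradient flow: with boundary matrices `B₊` (dimension d+1 → d) and `B₋`
(dimension d → d−1), positive diagonal weight matrices `W₋, W₀, W₊`, a continuous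
nonlinearity `φ` with antiderivative `F`, a forcing `ω`, and energy
`E θ = −⟨ω, W₀θ⟩ + Σ (W₊ F(B₊ᵀθ))ᵢ + Σ (W₋⁻¹ F(B₋W₀θ))ⱼ`,
the vector field `G θ = ω − [W₀⁻¹B₊W₊φ(B₊ᵀθ) + B₋ᵀW₋⁻¹φ(B₋W₀θ)]` satisfies
`G θ = −W₀⁻¹ ∇E(θ)`. -/
theorem simplicial_flow_is_rescaled_gradient_flow
    (nm n0 np : ℕ)
    (Bp : Matrix (Fin n0) (Fin np) ℝ) (Bm : Matrix (Fin nm) (Fin n0) ℝ)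
    (wm : Fin nm → ℝ) (w0 : Fin n0 → ℝ) (wp : Fin np → ℝ)
    (hwm : ∀ i, 0 < wm i) (hw0 : ∀ i, 0 < w0 i) (hwp : ∀ i, 0 < wp i)
    (φ F : ℝ → ℝ) (hφ : Continuous φ) (hF : Differentiable ℝ F) (hF' : deriv F = φ)
    (ω : Fin n0 → ℝ)
    (E : EuclideanSpace ℝ (Fin n0) → ℝ)
    (hE : ∀ θ : EuclideanSpace ℝ (Fin n0),
      E θ = -(ω ⬝ᵥ (Matrix.diagonal w0).mulVec θ)
        + ∑ i, ((Matrix.diagonal wp).mulVec (fun i => F (Bp.transpose.mulVec θ i))) i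
        + ∑ j, ((Matrix.diagonal fun j => (wm j)⁻¹).mulVec
            (fun j => F (Bm.mulVec ((Matrix.diagonal w0).mulVec θ) j))) j) :
    ∀ θ : EuclideanSpace ℝ (Fin n0),
      ω - ((Matrix.diagonal fun i => (w0 i)⁻¹).mulVec
            (Bp.mulVec ((Matrix.diagonal wp).mulVec fun i => φ (Bp.transpose.mulVec θ i)))
          + Bm.transpose.mulVec ((Matrix.diagonal fun j => (wm j)⁻¹).mulVec
            fun j => φ (Bm.mulVec ((Matrix.diagonal w0).mulVec θ) j)))
        = -((Matrix.diagonal fun i => (w0 i)⁻¹).mulVec ((gradient E θ : EuclideanSpace ℝ (Fin n0)))) :=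
  simplicial_flow_is_rescaled_gradient_flow_general nm n0 np Bp Bm wm w0 wp hw0 φ F hF hF' ω E hE
end

section
/- Let n₋, n₀, n₊ be natural numbers, B₊ a real n₀ × n₊ matrix, B₋ a real n₋ × n₀ matrix, and W₋, W₀, W₊ diagonal matrices of sizes n₋, n₀, n₊ with strictly positive diagonal entries. Let φ : ℝ → ℝ be differentiable and x ∈ ℝ^{n₀} a point such that there exist real numbers α > 0 and β > 0 with every entry of φ'(B₊ᵀ x) equal to α and every entry of φ'(B₋ W₀ x) equal to β. Then the linearization matrix L_x = −[ W₀⁻¹ B₊ W₊ diag(φ'(B₊ᵀ x)) B₊ᵀ + B₋ᵀ W₋⁻¹ diag(φ'(B₋ W₀ x)) B₋ W₀ ] is negative semidefinite with respect to the W₀-weighted inner product: for every z ∈ ℝ^{n₀}, ⟨W₀ z, L_x z⟩ ≤ 0. -/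
open Matrix BigOperators

/-!
At a point where both derivative vectors are constant and positive, `W₀ L_x` is minus the sum of
the Gram-type matrices `B₊ diag(α w₊) B₊ᵀ` and `(B₋ W₀)ᵀ diag(β / w₋) (B₋ W₀)`, so the
`W₀`-weighted form of `L_x` is minus a sum of two positive semidefinite quadratic forms.
-/

namespace Matrix

variable {m n : Type*} [Fintype m] [Fintype n]

lemma posSemidef_mul_diagonal_mul_transpose [DecidableEq m] {d : m → ℝ} (hd : ∀ i, 0 ≤ d i)
    (B : Matrix n m ℝ) : (B * diagonal d * Bᵀ).PosSemidef := by
  simpa [conjTranspose_eq_transpose_of_trivial] using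
    (posSemidef_diagonal_iff.mpr hd).mul_mul_conjTranspose_same B

lemma posSemidef_transpose_mul_diagonal_mul [DecidableEq m] {d : m → ℝ} (hd : ∀ i, 0 ≤ d i)
    (B : Matrix m n ℝ) : (Bᵀ * diagonal d * B).PosSemidef := by
  simpa [conjTranspose_eq_transpose_of_trivial] using
    (posSemidef_diagonal_iff.mpr hd).conjTranspose_mul_mul_same B

lemma PosSemidef.diagonal_mulVec_dotProduct_diagonal_inv_mul_mulVec_nonneg [DecidableEq n]
    {A : Matrix n n ℝ} (hA : A.PosSemidef) {w : n → ℝ} (hw : ∀ i, w i ≠ 0) (z : n → ℝ) :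
    0 ≤ (diagonal w *ᵥ z) ⬝ᵥ (((diagonal fun i => (w i)⁻¹) * A) *ᵥ z) := by
  have hcancel : (diagonal w *ᵥ z) ⬝ᵥ (((diagonal fun i => (w i)⁻¹) * A) *ᵥ z)
      = z ⬝ᵥ (A *ᵥ z) := by
    simp only [← mulVec_mulVec, mulVec_diagonal, dotProduct]
    exact Finset.sum_congr rfl fun i _ => by field_simp [hw i]
  simpa [hcancel] using hA.dotProduct_mulVec_nonneg z

lemma PosSemidef.diagonal_mulVec_dotProduct_mul_diagonal_mulVec_nonneg [DecidableEq n]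
    {A : Matrix n n ℝ} (hA : A.PosSemidef) (w z : n → ℝ) :
    0 ≤ (diagonal w *ᵥ z) ⬝ᵥ ((A * diagonal w) *ᵥ z) := by
  simpa [← mulVec_mulVec] using hA.dotProduct_mulVec_nonneg (diagonal w *ᵥ z)

end Matrix

theorem linearization_negative_semidefinite_of_constant_derivatives_general
    (nm n0 np : ℕ)
    (Bp : Matrix (Fin n0) (Fin np) ℝ) (Bm : Matrix (Fin nm) (Fin n0) ℝ)
    (wm : Fin nm → ℝ) (w0 : Fin n0 → ℝ) (wp : Fin np → ℝ)
    (hwm : ∀ i, 0 < wm i) (hw0 : ∀ i, 0 < w0 i) (hwp : ∀ i, 0 < wp i)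
    (φ : ℝ → ℝ)
    (x : Fin n0 → ℝ) (α β : ℝ) (hα : 0 < α) (hβ : 0 < β)
    (hαconst : ∀ i, deriv φ (Bp.transpose.mulVec x i) = α)
    (hβconst : ∀ j, deriv φ (Bm.mulVec ((Matrix.diagonal w0).mulVec x) j) = β) :
    ∀ z : Fin n0 → ℝ,
      ((Matrix.diagonal w0).mulVec z) ⬝ᵥ
        ((-((Matrix.diagonal fun i => (w0 i)⁻¹) * Bp * Matrix.diagonal wp
              * Matrix.diagonal (fun i => deriv φ (Bp.transpose.mulVec x i)) * Bp.transpose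
            + Bm.transpose * (Matrix.diagonal fun j => (wm j)⁻¹)
              * Matrix.diagonal
                  (fun j => deriv φ (Bm.mulVec ((Matrix.diagonal w0).mulVec x) j))
              * Bm * Matrix.diagonal w0)).mulVec z) ≤ 0 := by
  intro z
  rw [funext hαconst, funext hβconst, neg_mulVec, dotProduct_neg, neg_nonpos, add_mulVec,
    dotProduct_add, Matrix.mul_assoc _ (diagonal wp), diagonal_mul_diagonal,
    Matrix.mul_assoc Bmᵀ, diagonal_mul_diagonal]
  refine add_nonneg ?_ ?_
  · simpa only [Matrix.mul_assoc] using
      (posSemidef_mul_diagonal_mul_transpose (fun i => (mul_pos (hwp i) hα).le) Bp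
        ).diagonal_mulVec_dotProduct_diagonal_inv_mul_mulVec_nonneg (fun i => (hw0 i).ne') z
  · exact (posSemidef_transpose_mul_diagonal_mul
      (fun j => (mul_pos (inv_pos.mpr (hwm j)) hβ).le) Bm
        ).diagonal_mulVec_dotProduct_mul_diagonal_mulVec_nonneg w0 z

/-- If at a point `x` the componentwise derivatives `φ'(B₊ᵀx)` and `φ'(B₋W₀x)`
are constant vectors with positive entries `α` and `β`, then the linearization matrix
`L_x = −[W₀⁻¹B₊W₊ diag(φ'(B₊ᵀx)) B₊ᵀ + B₋ᵀW₋⁻¹ diag(φ'(B₋W₀x)) B₋W₀]`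
is negative semidefinite with respect to the `W₀`-weighted inner product:
`⟨W₀z, L_x z⟩ ≤ 0` for all `z`. -/
theorem linearization_negative_semidefinite_of_constant_derivatives
    (nm n0 np : ℕ)
    (Bp : Matrix (Fin n0) (Fin np) ℝ) (Bm : Matrix (Fin nm) (Fin n0) ℝ)
    (wm : Fin nm → ℝ) (w0 : Fin n0 → ℝ) (wp : Fin np → ℝ)
    (hwm : ∀ i, 0 < wm i) (hw0 : ∀ i, 0 < w0 i) (hwp : ∀ i, 0 < wp i)
    (φ : ℝ → ℝ) (hφ : Differentiable ℝ φ)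
    (x : Fin n0 → ℝ) (α β : ℝ) (hα : 0 < α) (hβ : 0 < β)
    (hαconst : ∀ i, deriv φ (Bp.transpose.mulVec x i) = α)
    (hβconst : ∀ j, deriv φ (Bm.mulVec ((Matrix.diagonal w0).mulVec x) j) = β) :
    ∀ z : Fin n0 → ℝ,
      ((Matrix.diagonal w0).mulVec z) ⬝ᵥ
        ((-((Matrix.diagonal fun i => (w0 i)⁻¹) * Bp * Matrix.diagonal wp
              * Matrix.diagonal (fun i => deriv φ (Bp.transpose.mulVec x i)) * Bp.transpose
            + Bm.transpose * (Matrix.diagonal fun j => (wm j)⁻¹)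
              * Matrix.diagonal
                  (fun j => deriv φ (Bm.mulVec ((Matrix.diagonal w0).mulVec x) j))
              * Bm * Matrix.diagonal w0)).mulVec z) ≤ 0 :=
  linearization_negative_semidefinite_of_constant_derivatives_general nm n0 np Bp Bm wm w0 wp hwm
    hw0 hwp φ x α β hα hβ hαconst hβconst
end

section
/- Let n₋, n₀, n₊ be natural numbers, B₊ a real n₀ × n₊ matrix, B₋ a real n₋ × n₀ matrix, and W₋, W₀, W₊ diagonal matrices of sizes n₋, n₀, n₊ with strictly positive diagonal entries, and let L = W₀⁻¹ B₊ W₊ B₊ᵀ + B₋ᵀ W₋⁻¹ B₋ W₀. Then every real eigenvalue of L is nonnegative: if L z = μ z for some real μ and some z ≠ 0, then μ ≥ 0. Consequently the linear flow z' = −c L z with c > 0 has no linearly unstable modes. -/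
open Matrix BigOperators

/-- Auxiliary: the weighted quadratic form of the Laplacian splits into two
manifestly nonnegative sums. -/
lemma weighted_laplacian_quadform
    (nm n0 np : ℕ)
    (Bp : Matrix (Fin n0) (Fin np) ℝ) (Bm : Matrix (Fin nm) (Fin n0) ℝ)
    (wm : Fin nm → ℝ) (w0 : Fin n0 → ℝ) (wp : Fin np → ℝ)
    (hw0 : ∀ i, 0 < w0 i) (z : Fin n0 → ℝ) :
    (fun i => w0 i * z i) ⬝ᵥ
      (((Matrix.diagonal fun i => (w0 i)⁻¹) * Bp * Matrix.diagonal wp * Bp.transpose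
        + Bm.transpose * (Matrix.diagonal fun j => (wm j)⁻¹) * Bm
          * Matrix.diagonal w0).mulVec z)
      = ∑ j, wp j * ((z ᵥ* Bp) j)^2
        + ∑ j, (wm j)⁻¹ * ((Bm.mulVec (fun i => w0 i * z i)) j)^2 := by
  set x : Fin n0 → ℝ := fun i => w0 i * z i with hx
  have hxz : x ᵥ* (Matrix.diagonal fun i => (w0 i)⁻¹) = z := by
    funext i
    simp only [hx, Matrix.vecMul_diagonal]
    field_simp
    exact mul_div_cancel_left₀ _ (hw0 i).ne'
  rw [Matrix.dotProduct_mulVec, Matrix.vecMul_add, add_dotProduct]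
  congr 1
  · simp only [← Matrix.vecMul_vecMul, hxz, Matrix.vecMul_transpose]
    rw [dotProduct_comm, Matrix.dotProduct_mulVec]
    simp only [Matrix.vecMul_diagonal, dotProduct]
    exact Finset.sum_congr rfl fun j _ => by ring
  · simp only [← Matrix.vecMul_vecMul, Matrix.vecMul_transpose]
    rw [show ((((Bm *ᵥ x) ᵥ* Matrix.diagonal fun j => (wm j)⁻¹) ᵥ* Bm) ᵥ* Matrix.diagonal w0) ⬝ᵥ z
        = (((Bm *ᵥ x) ᵥ* Matrix.diagonal fun j => (wm j)⁻¹) ᵥ* Bm) ⬝ᵥ x from ?_]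
    · rw [← Matrix.dotProduct_mulVec]
      simp only [Matrix.vecMul_diagonal, dotProduct]
      exact Finset.sum_congr rfl fun j _ => by ring
    · simp only [Matrix.vecMul_diagonal, dotProduct, hx]
      exact Finset.sum_congr rfl fun i _ => by ring

/-- Every real eigenvalue of the weighted combinatorial Laplacian
`L = W₀⁻¹B₊W₊B₊ᵀ + B₋ᵀW₋⁻¹B₋W₀` is nonnegative: if `Lz = μz` with `z ≠ 0` then `μ ≥ 0`;
consequently the linear flow `z' = −cLz` with `c > 0` has no linearly unstable modes
(every eigenvalue `−cμ` of the flow matrix is ≤ 0). -/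
theorem weighted_simplicial_laplacian_eigenvalues_nonneg
    (nm n0 np : ℕ)
    (Bp : Matrix (Fin n0) (Fin np) ℝ) (Bm : Matrix (Fin nm) (Fin n0) ℝ)
    (wm : Fin nm → ℝ) (w0 : Fin n0 → ℝ) (wp : Fin np → ℝ)
    (hwm : ∀ i, 0 < wm i) (hw0 : ∀ i, 0 < w0 i) (hwp : ∀ i, 0 < wp i)
    (μ : ℝ) (z : Fin n0 → ℝ) (hz : z ≠ 0)
    (heig : ((Matrix.diagonal fun i => (w0 i)⁻¹) * Bp * Matrix.diagonal wp * Bp.transpose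
        + Bm.transpose * (Matrix.diagonal fun j => (wm j)⁻¹) * Bm
          * Matrix.diagonal w0).mulVec z = μ • z) :
    0 ≤ μ ∧ ∀ c : ℝ, 0 < c → -(c * μ) ≤ 0 := by
  have hquad := weighted_laplacian_quadform nm n0 np Bp Bm wm w0 wp hw0 z
  rw [heig] at hquad
  have hlhs : (fun i => w0 i * z i) ⬝ᵥ (μ • z) = μ * ∑ i, w0 i * z i ^ 2 := by
    simp only [dotProduct, Pi.smul_apply, smul_eq_mul, Finset.mul_sum]
    exact Finset.sum_congr rfl fun i _ => by ring
  rw [hlhs] at hquad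
  -- the quadratic form is nonnegative
  have hnn : 0 ≤ μ * ∑ i, w0 i * z i ^ 2 := by
    rw [hquad]
    have h1 : 0 ≤ ∑ j, wp j * ((z ᵥ* Bp) j)^2 :=
      Finset.sum_nonneg fun j _ => mul_nonneg (hwp j).le (sq_nonneg _)
    have h2 : 0 ≤ ∑ j, (wm j)⁻¹ * ((Bm.mulVec (fun i => w0 i * z i)) j)^2 :=
      Finset.sum_nonneg fun j _ => mul_nonneg (inv_nonneg.mpr (hwm j).le) (sq_nonneg _)
    linarith
  -- the weighted norm of z is positive
  have hpos : 0 < ∑ i, w0 i * z i ^ 2 := by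
    obtain ⟨i0, hi0⟩ : ∃ i, z i ≠ 0 := by
      by_contra h
      push_neg at h
      exact hz (funext h)
    apply Finset.sum_pos' (fun i _ => mul_nonneg (hw0 i).le (sq_nonneg _))
    exact ⟨i0, Finset.mem_univ i0, mul_pos (hw0 i0) (by positivity)⟩
  have hmu : 0 ≤ μ := by
    by_contra h
    push_neg at h
    nlinarith
  exact ⟨hmu, fun c hc => neg_nonpos.mpr (mul_nonneg hc.le hmu)⟩
end

section
/- Let n₋, n₀, n₊ be natural numbers, B₊ a real n₀ × n₊ matrix, B₋ a real n₋ × n₀ matrix, and W₋, W₀, W₊ diagonal matrices of sizes n₋, n₀, n₊ with strictly positive diagonal entries, and let L = W₀⁻¹ B₊ W₊ B₊ᵀ + B₋ᵀ W₋⁻¹ B₋ W₀. Then the kernel of L is exactly the space of homological solutions: for z ∈ ℝ^{n₀}, L z = 0 if and only if B₊ᵀ z = 0 and B₋ W₀ z = 0. -/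
/-!
Since `W₀` is invertible, `L z = 0` iff `W₀ L z = 0`, and `W₀ L = B₊ W₊ B₊ᵀ + (B₋ W₀)ᵀ W₋⁻¹ (B₋ W₀)`
is symmetric. Pairing `W₀ L z` with `z` gives `⟪B₊ᵀ z, W₊ B₊ᵀ z⟫ + ⟪B₋ W₀ z, W₋⁻¹ B₋ W₀ z⟫`,
a sum of two nonnegative terms which, the weights being positive definite, vanishes exactly
when `B₊ᵀ z = 0` and `B₋ W₀ z = 0`.
-/

open Matrix

namespace Matrix

variable {m n p R : Type*} [Fintype m] [Fintype n] [Fintype p]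
  [Ring R] [PartialOrder R] [StarRing R]

lemma PosDef.dotProduct_conjTranspose_mul_mul_mulVec_eq_zero_iff {A : Matrix m m R}
    (hA : A.PosDef) (B : Matrix m n R) (x : n → R) :
    star x ⬝ᵥ (Bᴴ * A * B) *ᵥ x = 0 ↔ B *ᵥ x = 0 := by
  rw [← mulVec_mulVec, ← mulVec_mulVec, dotProduct_mulVec, ← star_mulVec]
  refine ⟨fun h => ?_, fun h => by rw [h, mulVec_zero, dotProduct_zero]⟩
  by_contra hBx
  exact (hA.dotProduct_mulVec_pos hBx).ne' h

lemma conjTranspose_mul_mul_add_mulVec_eq_zero_iff [IsOrderedAddMonoid R]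
    {A : Matrix m m R} {D : Matrix p p R} (hA : A.PosDef) (hD : D.PosDef)
    (B : Matrix m n R) (C : Matrix p n R) (x : n → R) :
    (Bᴴ * A * B + Cᴴ * D * C) *ᵥ x = 0 ↔ B *ᵥ x = 0 ∧ C *ᵥ x = 0 := by
  refine ⟨fun h => ?_, fun ⟨hB, hC⟩ => ?_⟩
  · have hsum : star x ⬝ᵥ (Bᴴ * A * B) *ᵥ x + star x ⬝ᵥ (Cᴴ * D * C) *ᵥ x = 0 := by
      rw [← dotProduct_add, ← add_mulVec, h, dotProduct_zero]
    have hBAB := (hA.posSemidef.conjTranspose_mul_mul_same B).dotProduct_mulVec_nonneg x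
    have hCDC := (hD.posSemidef.conjTranspose_mul_mul_same C).dotProduct_mulVec_nonneg x
    rwa [add_eq_zero_iff_of_nonneg hBAB hCDC,
      hA.dotProduct_conjTranspose_mul_mul_mulVec_eq_zero_iff,
      hD.dotProduct_conjTranspose_mul_mul_mulVec_eq_zero_iff] at hsum
  · rw [add_mulVec, ← mulVec_mulVec, ← mulVec_mulVec (v := x), hB, hC, mulVec_zero, mulVec_zero,
      add_zero]

end Matrix

/-- The kernel of the weighted combinatorial Laplacian
`L = W₀⁻¹B₊W₊B₊ᵀ + B₋ᵀW₋⁻¹B₋W₀` is exactly the space of homological solutions: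
`Lz = 0` if and only if `B₊ᵀz = 0` and `B₋W₀z = 0`. -/
theorem kernel_of_weighted_simplicial_laplacian
    (nm n0 np : ℕ)
    (Bp : Matrix (Fin n0) (Fin np) ℝ) (Bm : Matrix (Fin nm) (Fin n0) ℝ)
    (wm : Fin nm → ℝ) (w0 : Fin n0 → ℝ) (wp : Fin np → ℝ)
    (hwm : ∀ i, 0 < wm i) (hw0 : ∀ i, 0 < w0 i) (hwp : ∀ i, 0 < wp i) :
    ∀ z : Fin n0 → ℝ,
      ((Matrix.diagonal fun i => (w0 i)⁻¹) * Bp * Matrix.diagonal wp * Bp.transpose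
          + Bm.transpose * (Matrix.diagonal fun j => (wm j)⁻¹) * Bm
            * Matrix.diagonal w0).mulVec z = 0
        ↔ Bp.transpose.mulVec z = 0 ∧ Bm.mulVec ((Matrix.diagonal w0).mulVec z) = 0 := by
  intro z
  have hW0 : diagonal w0 * diagonal (fun i => (w0 i)⁻¹) = 1 := by
    rw [diagonal_mul_diagonal, ← diagonal_one]
    exact congrArg diagonal (funext fun i => mul_inv_cancel₀ (hw0 i).ne')
  have hW0_inj : Function.Injective (diagonal w0).mulVec :=
    mulVec_injective_of_isUnit ((isUnit_iff_isUnit_det _).mpr (isUnit_det_of_right_inverse hW0))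
  have hsymm : diagonal w0 * ((diagonal fun i => (w0 i)⁻¹) * Bp * diagonal wp * Bpᵀ
      + Bmᵀ * (diagonal fun j => (wm j)⁻¹) * Bm * diagonal w0)
      = Bpᵀᴴ * diagonal wp * Bpᵀ + (Bm * diagonal w0)ᴴ * (diagonal fun j => (wm j)⁻¹)
        * (Bm * diagonal w0) := by
    simp only [conjTranspose_eq_transpose_of_trivial, transpose_transpose, transpose_mul,
      diagonal_transpose, mul_add, ← Matrix.mul_assoc, hW0, Matrix.one_mul]
  rw [← hW0_inj.eq_iff' (mulVec_zero _), mulVec_mulVec, hsymm, mulVec_mulVec,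
    conjTranspose_mul_mul_add_mulVec_eq_zero_iff (PosDef.diagonal hwp)
      (PosDef.diagonal fun j => inv_pos.mpr (hwm j))]
end

section
/- Let n ≥ 1 be a natural number, p an integer, and c : ZMod n → ℝ a symmetric circulant coupling, i.e. c(−k) = c(k) for all k ∈ ZMod n. Define the twist configuration θ : ZMod n → ℝ by θ_j = 2π p · j̃ / n, where j̃ ∈ {0, …, n−1} is the canonical representative of j. Then θ is a fixed point of the homogeneous Kuramoto system with circulant coupling: for every i ∈ ZMod n, Σ_{j ∈ ZMod n} c(j − i) · sin(θ_j − θ_i) = 0. -/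
open Matrix BigOperators

/-- For `n ≥ 1`, an integer `p`, and a symmetric circulant coupling
`c : ZMod n → ℝ` (i.e. `c(−k) = c(k)`), the twist configuration
`θ_j = 2πp·j̃/n` (where `j̃ ∈ {0,…,n−1}` is the canonical representative of `j`)
is a fixed point of the homogeneous Kuramoto system:
`Σ_j c(j − i) sin(θ_j − θ_i) = 0` for every `i`. -/
theorem twist_is_fixed_point_of_circulant_kuramoto
    (n : ℕ) [NeZero n] (p : ℤ) (c : ZMod n → ℝ)
    (hc : ∀ k : ZMod n, c (-k) = c k)
    (θ : ZMod n → ℝ)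
    (hθ : ∀ j : ZMod n, θ j = 2 * Real.pi * (p : ℝ) * (j.val : ℝ) / (n : ℝ)) :
    ∀ i : ZMod n, ∑ j : ZMod n, c (j - i) * Real.sin (θ j - θ i) = 0 := by
  have hn : (0:ℝ) < n := by exact_mod_cast (NeZero.pos n)
  have hn' : (n:ℝ) ≠ 0 := hn.ne'
  set s : ZMod n → ℝ := fun k => Real.sin (2 * Real.pi * (p:ℝ) * (k.val : ℝ) / n) with hs
  have hsodd : ∀ k : ZMod n, s (-k) = - s k := by
    intro k
    by_cases hk : k = 0
    · simp [hk, hs]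
    · have hv : ((-k).val : ℝ) = (n : ℝ) - (k.val : ℝ) := by
        rw [ZMod.neg_val, if_neg hk]
        push_cast [Nat.cast_sub (le_of_lt (ZMod.val_lt k))]
        ring
      simp only [hs, hv]
      have h1 : 2 * Real.pi * (p:ℝ) * ((n:ℝ) - (k.val:ℝ)) / n
          = -(2 * Real.pi * (p:ℝ) * (k.val:ℝ) / n) + (p:ℤ) * (2 * Real.pi) := by
        field_simp; ring
      rw [h1, Real.sin_add_int_mul_two_pi, Real.sin_neg]
  have key : ∀ i j : ZMod n, Real.sin (θ j - θ i) = s (j - i) := by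
    intro i j
    have hcast : ((((j - i).val : ℤ)) : ZMod n) = (((j.val : ℤ) - (i.val : ℤ) : ℤ) : ZMod n) := by
      push_cast [ZMod.natCast_val, ZMod.intCast_cast, ZMod.intCast_zmod_cast]
      simp
    have hdvd : (n:ℤ) ∣ ((j.val : ℤ) - (i.val : ℤ)) - ((j - i).val : ℤ) :=
      ((ZMod.intCast_eq_intCast_iff _ _ _).mp hcast).dvd
    obtain ⟨m, hm⟩ := hdvd
    have hr : (j.val:ℝ) - (i.val:ℝ) = ((j-i).val : ℝ) + (n:ℝ) * (m:ℝ) := by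
      have := congrArg (Int.cast : ℤ → ℝ) hm
      push_cast at this
      linarith
    rw [hθ, hθ, hs]
    have heq : 2 * Real.pi * (p:ℝ) * (j.val:ℝ)/n - 2 * Real.pi * (p:ℝ) * (i.val:ℝ)/n
        = 2 * Real.pi * (p:ℝ) * (((j-i).val:ℝ))/n + ((p*m : ℤ):ℝ) * (2*Real.pi) := by
      calc 2 * Real.pi * (p:ℝ) * (j.val:ℝ)/n - 2 * Real.pi * (p:ℝ) * (i.val:ℝ)/n
          = 2 * Real.pi * (p:ℝ) * ((j.val:ℝ) - (i.val:ℝ))/n := by ring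
        _ = 2 * Real.pi * (p:ℝ) * (((j-i).val:ℝ) + (n:ℝ)*(m:ℝ))/n := by rw [hr]
        _ = 2 * Real.pi * (p:ℝ) * (((j-i).val:ℝ))/n + 2*Real.pi*(p:ℝ)*(m:ℝ)*((n:ℝ)/n) := by ring
        _ = 2 * Real.pi * (p:ℝ) * (((j-i).val:ℝ))/n + ((p*m : ℤ):ℝ) * (2*Real.pi) := by
              rw [div_self hn']; push_cast; ring
    rw [heq, Real.sin_add_int_mul_two_pi]
  intro i
  have hre : ∑ j : ZMod n, c (j - i) * Real.sin (θ j - θ i)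
      = ∑ k : ZMod n, c k * s k := by
    rw [← Equiv.sum_comp (Equiv.subRight i) (fun k => c k * s k)]
    simp [key]
  rw [hre]
  have h0 : ∑ k : ZMod n, c k * s k = ∑ k : ZMod n, c (-k) * s (-k) :=
    (Equiv.sum_comp (Equiv.neg (ZMod n)) (fun k => c k * s k)).symm
  simp only [hc, hsodd, mul_neg] at h0
  rw [Finset.sum_neg_distrib] at h0
  linarith
end

section
/- Let B₁ be a real n_V × n_E matrix each of whose columns sums to zero (as holds for the oriented incidence matrix of a graph), and let B₂ be any real n_E × n_T matrix. Let x ∈ ℝ^{n_E} and α ∈ ℝ, and suppose B₂ᵀ x = 0 and that every entry of B₁ x differs from α by an integer multiple of 2π, i.e. for each i there is k_i ∈ ℤ with (B₁ x)_i = α + 2π k_i. Then x is a fixed point of the homogeneous sine edge flow: B₂ sin(B₂ᵀ x) + B₁ᵀ sin(B₁ x) = 0, where sin is applied componentwise. -/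
open Matrix BigOperators

/-- Let `B₁` be a real `n_V × n_E` matrix each of whose columns sums to zero,
and `B₂` any real `n_E × n_T` matrix.  If `B₂ᵀx = 0` and every entry of `B₁x` differs from
`α` by an integer multiple of `2π`, then `x` is a fixed point of the homogeneous sine edge
flow: `B₂ sin(B₂ᵀx) + B₁ᵀ sin(B₁x) = 0` (with `sin` applied componentwise). -/
theorem twist_like_is_fixed_point_of_sine_edge_flow
    (nV nE nT : ℕ)
    (B1 : Matrix (Fin nV) (Fin nE) ℝ) (hcol : ∀ e, ∑ v, B1 v e = 0)
    (B2 : Matrix (Fin nE) (Fin nT) ℝ)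
    (x : Fin nE → ℝ) (α : ℝ)
    (hx2 : B2.transpose.mulVec x = 0)
    (hx1 : ∀ i, ∃ k : ℤ, B1.mulVec x i = α + 2 * Real.pi * (k : ℝ)) :
    B2.mulVec (fun τ => Real.sin (B2.transpose.mulVec x τ))
      + B1.transpose.mulVec (fun v => Real.sin (B1.mulVec x v)) = 0 := by
  have h2 : (fun τ => Real.sin (B2.transpose.mulVec x τ)) = fun _ => (0 : ℝ) := by
    funext τ
    rw [hx2]
    simp
  have h1 : (fun v => Real.sin (B1.mulVec x v)) = fun _ => Real.sin α := by
    funext v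
    obtain ⟨k, hk⟩ := hx1 v
    rw [hk]
    rw [show α + 2 * Real.pi * (k : ℝ) = α + (k : ℤ) * (2 * Real.pi) by push_cast; ring]
    exact Real.sin_add_int_mul_two_pi α k
  rw [h1, h2]
  funext e
  simp [mulVec, dotProduct, transpose, ← Finset.sum_mul, hcol e]
end

section
/- Let B₁ be a real n_V × n_E matrix and B₂ a real n_E × n_T matrix, x ∈ ℝ^{n_E}, α ∈ ℝ, and suppose B₂ᵀ x = 0 and every entry of B₁ x differs from α by an integer multiple of 2π. Then the Fréchet derivative of the map θ ↦ −B₂ sin(B₂ᵀ θ) − B₁ᵀ sin(B₁ θ) at x is the linear map z ↦ −(B₂ B₂ᵀ + cos(α) · B₁ᵀ B₁) z; moreover, if cos(α) > 0, this linearization is negative semidefinite: zᵀ (B₂ B₂ᵀ + cos(α) B₁ᵀ B₁) z ≥ 0 for all z ∈ ℝ^{n_E}. -/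
/-! The flow is built from linear maps and the componentwise sine, whose derivative along
`θ ↦ M θ` is the diagonal matrix of cosines of `M x`, followed by `M`. At a twist-like point
these cosines are `cos 0 = 1` on triangles and `cos α` on vertices, which gives the Jacobian
`−(B₂B₂ᵀ + cos α · B₁ᵀB₁)`; for `cos α > 0` this is minus a nonnegative combination of the Gram
matrices `B₂B₂ᵀ` and `B₁ᵀB₁`. -/

open Matrix

section

variable {m n : Type*} [Fintype m] [Fintype n] [DecidableEq m]

theorem hasFDerivAt_comp_mulVec {f : ℝ → ℝ} {f' : m → ℝ} (M : Matrix m n ℝ) {x : n → ℝ}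
    (hf : ∀ i, HasDerivAt f (f' i) ((M *ᵥ x) i)) :
    HasFDerivAt (fun θ i => f ((M *ᵥ θ) i))
      (diagonal f' * M).mulVecLin.toContinuousLinearMap x := by
  refine hasFDerivAt_pi'.2 fun i => ?_
  have hrow := ((LinearMap.proj i).comp M.mulVecLin).toContinuousLinearMap.hasFDerivAt (x := x)
  refine ((hf i).comp_hasFDerivAt x hrow).congr_fderiv ?_
  ext z
  simp [- mulVec_mulVec, mulVec_diagonal]

theorem hasFDerivAt_comp_mulVec_of_const_deriv {f : ℝ → ℝ} {c : ℝ} (M : Matrix m n ℝ)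
    {x : n → ℝ} (hf : ∀ i, HasDerivAt f c ((M *ᵥ x) i)) :
    HasFDerivAt (fun θ i => f ((M *ᵥ θ) i)) (c • M).mulVecLin.toContinuousLinearMap x := by
  rw [smul_eq_diagonal_mul]
  exact hasFDerivAt_comp_mulVec M hf

end

theorem HasFDerivAt.matrix_mulVec {k m n : Type*} [Fintype k] [Fintype m] [Fintype n]
    {g : (n → ℝ) → m → ℝ} {A : Matrix m n ℝ} {x : n → ℝ}
    (hg : HasFDerivAt g A.mulVecLin.toContinuousLinearMap x) (N : Matrix k m ℝ) :
    HasFDerivAt (fun θ => N *ᵥ g θ) (N * A).mulVecLin.toContinuousLinearMap x := by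
  refine ((N.mulVecLin.toContinuousLinearMap.hasFDerivAt (x := g x)).comp x hg).congr_fderiv ?_
  ext z
  simp [mulVec_mulVec]

/-- If `B₂ᵀx = 0` and every entry of `B₁x` differs from `α` by an integer
multiple of `2π`, then the Fréchet derivative of the homogeneous sine edge flow
`θ ↦ −B₂ sin(B₂ᵀθ) − B₁ᵀ sin(B₁θ)` at `x` is the linear map
`z ↦ −(B₂B₂ᵀ + cos(α)·B₁ᵀB₁) z`; moreover, if `cos α > 0`, this linearization is negative
semidefinite: `zᵀ(B₂B₂ᵀ + cos(α)B₁ᵀB₁)z ≥ 0` for all `z`. -/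
theorem linearization_of_sine_edge_flow_at_twist_like
    (nV nE nT : ℕ)
    (B1 : Matrix (Fin nV) (Fin nE) ℝ) (B2 : Matrix (Fin nE) (Fin nT) ℝ)
    (x : Fin nE → ℝ) (α : ℝ)
    (hx2 : B2.transpose.mulVec x = 0)
    (hx1 : ∀ i, ∃ k : ℤ, B1.mulVec x i = α + 2 * Real.pi * (k : ℝ)) :
    HasFDerivAt
        (fun θ : Fin nE → ℝ =>
          -(B2.mulVec fun τ => Real.sin (B2.transpose.mulVec θ τ))
            - B1.transpose.mulVec fun v => Real.sin (B1.mulVec θ v))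
        (LinearMap.toContinuousLinearMap
          (Matrix.mulVecLin (-(B2 * B2.transpose + Real.cos α • (B1.transpose * B1))))) x
      ∧ (0 < Real.cos α →
          ∀ z : Fin nE → ℝ,
            0 ≤ z ⬝ᵥ ((B2 * B2.transpose + Real.cos α • (B1.transpose * B1)).mulVec z)) := by
  constructor
  · have hsin_triangle : ∀ τ, HasDerivAt Real.sin 1 ((B2ᵀ *ᵥ x) τ) := fun τ => by
      simpa [hx2] using Real.hasDerivAt_sin 0
    have hsin_vertex : ∀ v, HasDerivAt Real.sin (Real.cos α) ((B1 *ᵥ x) v) := fun v => by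
      obtain ⟨k, hk⟩ := hx1 v
      have hcos : Real.cos ((B1 *ᵥ x) v) = Real.cos α := by
        rw [hk, mul_comm, Real.cos_add_int_mul_two_pi]
      simpa [hcos] using Real.hasDerivAt_sin ((B1 *ᵥ x) v)
    have h2 := (hasFDerivAt_comp_mulVec_of_const_deriv B2ᵀ hsin_triangle).matrix_mulVec B2
    have h1 := (hasFDerivAt_comp_mulVec_of_const_deriv B1 hsin_vertex).matrix_mulVec B1ᵀ
    have hmat : -(B2 * (1 : ℝ) • B2ᵀ) - B1ᵀ * Real.cos α • B1
        = -(B2 * B2ᵀ + Real.cos α • (B1ᵀ * B1)) := by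
      rw [one_smul, Matrix.mul_smul]; abel
    refine (h2.neg.sub h1).congr_fderiv ?_
    ext z : 1
    simp [← hmat]
  · intro hcos z
    exact ((posSemidef_self_mul_conjTranspose B2).add
      ((posSemidef_conjTranspose_mul_self B1).smul hcos.le)).dotProduct_mulVec_nonneg z
end
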